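/- Let y₁, y₂ ∈ ℝ and let θ* be a critical point of the quartic objective E with E''(θ*) > 0 and y₁ > θ*². Then the RE constant of θ*, i.e. sup{α ≥ 0 : θ* is a local minimum point of E_α}, equals E''(θ*) / (2(y₁ − θ*²)) = (6θ*² + 1 − 2y₁) / (2(y₁ − θ*²)); in particular it is finite. -/

import Mathlib

/-!
The expanded objective `E_α` is `E` with data `ŷ`, so at `θ*` one computes
`E_α'(θ*) = (1 + α) E'(θ*) = 0` and `E_α''(θ*) = E''(θ*) - 2α(y₁ - θ*²)`. By the second-derivative
test `θ*` is a local minimum of `E_α` when this is positive and is not one when it is negative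
(it is then a local maximum, and a point that is both is one where `E_α` is locally constant,
forcing `E_α''(θ*) = 0`). Hence the admissible `α` contain `[0, r)` and lie below
`r = E''(θ*) / (2(y₁ - θ*²))`, so their supremum is `r`.
-/

open scoped ENNReal

/-- The quartic least-squares objective `E(θ) = ½((y₁ − θ²)² + (y₂ − θ)²)`. -/
noncomputable def quarticE (y₁ y₂ : ℝ) (θ : ℝ) : ℝ :=
  (1 / 2) * ((y₁ - θ ^ 2) ^ 2 + (y₂ - θ) ^ 2)

/-- The `α`-expanded quartic objective at the point `θs`. -/
noncomputable def quarticEexp (y₁ y₂ θs α : ℝ) (θ : ℝ) : ℝ :=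
  (1 / 2) * (((y₁ + α * (y₁ - θs ^ 2)) - θ ^ 2) ^ 2 + ((y₂ + α * (y₂ - θs)) - θ) ^ 2)

/-- The RE constant of `θs`: `sup {α ≥ 0 : θs is a local minimum point of E_α}`,
as an element of `[0, ∞]`. -/
noncomputable def reConst (y₁ y₂ θs : ℝ) : ℝ≥0∞ :=
  sSup (ENNReal.ofReal '' {α : ℝ | 0 ≤ α ∧ IsLocalMin (quarticEexp y₁ y₂ θs α) θs})

open scoped Topology

theorem not_isLocalMin_of_deriv_deriv_neg {f : ℝ → ℝ} {x₀ : ℝ}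
    (hf : deriv (deriv f) x₀ < 0) (hd : deriv f x₀ = 0) (hc : ContinuousAt f x₀) :
    ¬IsLocalMin f x₀ := by
  intro hmin
  have hconst : f =ᶠ[𝓝 x₀] fun _ => f x₀ := by
    filter_upwards [hmin, isLocalMax_of_deriv_deriv_neg hf hd hc] with x hle hge
    exact le_antisymm hge hle
  have hzero := hconst.deriv.deriv.eq_of_nhds
  simp only [deriv_const', deriv_const] at hzero
  exact hf.ne hzero

theorem ENNReal.sSup_ofReal_image_eq {S : Set ℝ} {r : ℝ} (hle : ∀ α ∈ S, α ≤ r)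
    (hIco : Set.Ico 0 r ⊆ S) : sSup (ENNReal.ofReal '' S) = ENNReal.ofReal r := by
  refine le_antisymm (sSup_le ?_) (le_of_forall_lt fun c hc => ?_)
  · rintro _ ⟨α, hα, rfl⟩
    exact ENNReal.ofReal_le_ofReal (hle α hα)
  obtain ⟨b, hcb, hbr⟩ := exists_between hc
  have hb : b ≠ ⊤ := hbr.ne_top
  have hbS : b.toReal ∈ S :=
    hIco (Set.mem_Ico.2 ⟨ENNReal.toReal_nonneg, (ENNReal.lt_ofReal_iff_toReal_lt hb).1 hbr⟩)
  calc c < b := hcb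
    _ = ENNReal.ofReal b.toReal := (ENNReal.ofReal_toReal hb).symm
    _ ≤ _ := le_sSup (Set.mem_image_of_mem _ hbS)

theorem hasDerivAt_quarticE (y₁ y₂ x : ℝ) :
    HasDerivAt (quarticE y₁ y₂) (2 * x ^ 3 + (1 - 2 * y₁) * x - y₂) x := by
  have h := ((((hasDerivAt_pow 2 x).const_sub y₁).pow 2).add
    (((hasDerivAt_id' x).const_sub y₂).pow 2)).const_mul (1 / 2 : ℝ)
  refine h.congr_deriv ?_
  push_cast
  ring

theorem hasDerivAt_deriv_quarticE (y₁ y₂ x : ℝ) :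
    HasDerivAt (deriv (quarticE y₁ y₂)) (6 * x ^ 2 + 1 - 2 * y₁) x := by
  rw [funext fun x => (hasDerivAt_quarticE y₁ y₂ x).deriv]
  have h := ((((hasDerivAt_pow 3 x).const_mul 2).add
    ((hasDerivAt_id' x).const_mul (1 - 2 * y₁))).sub_const y₂)
  refine h.congr_deriv ?_
  push_cast
  ring

theorem continuous_quarticE (y₁ y₂ : ℝ) : Continuous (quarticE y₁ y₂) := by
  unfold quarticE
  fun_prop

theorem quarticEexp_eq (y₁ y₂ θs α : ℝ) :
    quarticEexp y₁ y₂ θs α = quarticE (y₁ + α * (y₁ - θs ^ 2)) (y₂ + α * (y₂ - θs)) :=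
  rfl

theorem deriv_quarticEexp (y₁ y₂ θs α : ℝ) :
    deriv (quarticEexp y₁ y₂ θs α) θs = (1 + α) * deriv (quarticE y₁ y₂) θs := by
  rw [quarticEexp_eq, (hasDerivAt_quarticE _ _ θs).deriv, (hasDerivAt_quarticE _ _ θs).deriv]
  ring

theorem deriv_deriv_quarticEexp (y₁ y₂ θs α : ℝ) :
    deriv (deriv (quarticEexp y₁ y₂ θs α)) θs
      = deriv (deriv (quarticE y₁ y₂)) θs - 2 * α * (y₁ - θs ^ 2) := by
  rw [quarticEexp_eq, (hasDerivAt_deriv_quarticE _ _ θs).deriv,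
    (hasDerivAt_deriv_quarticE _ _ θs).deriv]
  ring

section CriticalPoint

variable {y₁ y₂ θs α : ℝ}

theorem isLocalMin_quarticEexp (hcrit : deriv (quarticE y₁ y₂) θs = 0)
    (h : 2 * α * (y₁ - θs ^ 2) < deriv (deriv (quarticE y₁ y₂)) θs) :
    IsLocalMin (quarticEexp y₁ y₂ θs α) θs :=
  isLocalMin_of_deriv_deriv_pos (by rw [deriv_deriv_quarticEexp]; linarith)
    (by rw [deriv_quarticEexp, hcrit, mul_zero]) (continuous_quarticE _ _).continuousAt

theorem not_isLocalMin_quarticEexp (hcrit : deriv (quarticE y₁ y₂) θs = 0)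
    (h : deriv (deriv (quarticE y₁ y₂)) θs < 2 * α * (y₁ - θs ^ 2)) :
    ¬IsLocalMin (quarticEexp y₁ y₂ θs α) θs :=
  not_isLocalMin_of_deriv_deriv_neg (by rw [deriv_deriv_quarticEexp]; linarith)
    (by rw [deriv_quarticEexp, hcrit, mul_zero]) (continuous_quarticE _ _).continuousAt

theorem reConst_eq_of_deriv_eq_zero (hcrit : deriv (quarticE y₁ y₂) θs = 0)
    (hy₁ : θs ^ 2 < y₁) :
    reConst y₁ y₂ θs
      = ENNReal.ofReal (deriv (deriv (quarticE y₁ y₂)) θs / (2 * (y₁ - θs ^ 2))) := by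
  have hd : 0 < 2 * (y₁ - θs ^ 2) := by linarith
  refine ENNReal.sSup_ofReal_image_eq (fun α hα => le_of_not_gt fun hlt => ?_)
    fun α hα => ⟨hα.1, isLocalMin_quarticEexp hcrit ?_⟩
  · rw [div_lt_iff₀ hd] at hlt
    exact not_isLocalMin_quarticEexp hcrit (by linarith) hα.2
  · have hlt := (lt_div_iff₀ hd).1 hα.2
    linarith

end CriticalPoint

theorem stmt_8_general (y₁ y₂ θs : ℝ)
    (hcrit : deriv (quarticE y₁ y₂) θs = 0)
    (hy₁ : θs ^ 2 < y₁) :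
    reConst y₁ y₂ θs
      = ENNReal.ofReal (iteratedDeriv 2 (quarticE y₁ y₂) θs / (2 * (y₁ - θs ^ 2))) ∧
    reConst y₁ y₂ θs
      = ENNReal.ofReal ((6 * θs ^ 2 + 1 - 2 * y₁) / (2 * (y₁ - θs ^ 2))) ∧
    reConst y₁ y₂ θs ≠ ⊤ := by
  have hRE := reConst_eq_of_deriv_eq_zero hcrit hy₁
  refine ⟨?_, ?_, hRE ▸ ENNReal.ofReal_ne_top⟩
  · rw [iteratedDeriv_succ, iteratedDeriv_one, hRE]
  · rw [hRE, (hasDerivAt_deriv_quarticE y₁ y₂ θs).deriv]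

theorem stmt_8 (y₁ y₂ θs : ℝ)
    (hcrit : deriv (quarticE y₁ y₂) θs = 0)
    (hpos : 0 < iteratedDeriv 2 (quarticE y₁ y₂) θs)
    (hy₁ : θs ^ 2 < y₁) :
    reConst y₁ y₂ θs
      = ENNReal.ofReal (iteratedDeriv 2 (quarticE y₁ y₂) θs / (2 * (y₁ - θs ^ 2))) ∧
    reConst y₁ y₂ θs
      = ENNReal.ofReal ((6 * θs ^ 2 + 1 - 2 * y₁) / (2 * (y₁ - θs ^ 2))) ∧
    reConst y₁ y₂ θs ≠ ⊤ :=
  stmt_8_general y₁ y₂ θs hcrit hy₁
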